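/- Let (|h₀|², |h₁|²) have joint density f(y₁, y₂) = (1/((1−ρ²)σ₀²σ₁²)) exp(−(y₁/σ₀² + y₂/σ₁²)/(1−ρ²)) I₀(2ρ√(y₁y₂)/(σ₀σ₁(1−ρ²))) on (0,∞)², where 0 < ρ < 1 and I₀ is the modified Bessel function of the first kind. Then the density of X = |h₀|²/|h₁|² is f_X(x) = Σ_{m=0}^∞ C_{4m} x^m / (1 + x/ρ)^{2m+2} for x ≥ 0, where C_{4m} = (1−ρ²) ρ^{m−1} (2m+1)! / (m!)², under the normalization ρ = σ₀²/σ₁². -/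

import Mathlib

/-!
Substituting `y₁ = xy`, `y₂ = y` and `σ₀² = ρσ₁²`, and writing `s = σ₁²(1-ρ²)`, the integrand
becomes `(1-ρ²)/(ρs²) · y e^{-cy} I₀(2βy)` with `c = (1 + x/ρ)/s` and `β = √(ρx)/s`. Expanding
`I₀` and integrating term by term against `∫₀^∞ y^{2m+1} e^{-cy} dy = (2m+1)!/c^{2m+2}` gives
`Σ (2m+1)!/(m!)² β^{2m}/c^{2m+2}`, which is the claimed series. The terms are nonnegative and
`(2m+1)!/(m!)² = (2m+1)·C(2m,m) ≤ (2m+1)·4^m`, so the interchange is justified once `4β² < c²`,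
i.e. `4ρx < (1 + x/ρ)²`, which holds because `ρ < 1`.
-/

open Real MeasureTheory

noncomputable def besselI0 (z : ℝ) : ℝ :=
  ∑' m : ℕ, (z / 2) ^ (2 * m) / ((m.factorial : ℝ)) ^ 2

open Set
open scoped Nat

lemma integral_pow_mul_exp_neg_mul_Ioi (n : ℕ) {c : ℝ} (hc : 0 < c) :
    ∫ y in Ioi 0, y ^ n * exp (-(c * y)) = n ! / c ^ (n + 1) := by
  have h := integral_rpow_mul_exp_neg_mul_Ioi (a := n + 1) (by positivity) hc
  simp only [add_sub_cancel_right, rpow_natCast] at h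
  rw [h, Gamma_nat_eq_factorial, ← Nat.cast_succ, rpow_natCast, one_div, inv_pow,
    inv_mul_eq_div]

lemma integrableOn_pow_mul_exp_neg_mul_Ioi (n : ℕ) {c : ℝ} (hc : 0 < c) :
    IntegrableOn (fun y ↦ y ^ n * exp (-(c * y))) (Ioi 0) :=
  .of_integral_ne_zero (by rw [integral_pow_mul_exp_neg_mul_Ioi n hc]; positivity)

lemma Nat.factorial_two_mul_add_one_eq_mul_centralBinom (m : ℕ) :
    (2 * m + 1)! = (2 * m + 1) * m.centralBinom * m ! ^ 2 := by
  have h := Nat.choose_mul_factorial_mul_factorial (show m ≤ 2 * m by omega)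
  rw [show 2 * m - m = m by omega] at h
  rw [Nat.factorial_succ, Nat.centralBinom_eq_two_mul_choose, ← h]
  ring

lemma summable_factorial_two_mul_add_one_div_sq_mul_pow {q : ℝ} (hq0 : 0 ≤ q) (hq : 4 * q < 1) :
    Summable fun m : ℕ ↦ ((2 * m + 1)! : ℝ) / (m ! : ℝ) ^ 2 * q ^ m := by
  have hgeom : Summable fun m : ℕ ↦ (2 * (m : ℝ) + 1) * (4 * q) ^ m := by
    have h1 := summable_pow_mul_geometric_of_norm_lt_one 1
      (r := 4 * q) (by rw [norm_of_nonneg (by positivity)]; exact hq)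
    simp only [pow_one] at h1
    simpa [add_mul, mul_assoc] using
      (h1.mul_left 2).add (summable_geometric_of_lt_one (by positivity) hq)
  refine hgeom.of_nonneg_of_le (fun m ↦ by positivity) (fun m ↦ ?_)
  rw [Nat.factorial_two_mul_add_one_eq_mul_centralBinom, Nat.cast_mul, Nat.cast_pow,
    mul_div_cancel_right₀ _ (by positivity), mul_pow, ← mul_assoc]
  gcongr
  push_cast
  gcongr
  exact_mod_cast Nat.centralBinom_le_four_pow m

theorem integral_mul_exp_neg_mul_besselI0 {b c : ℝ} (hc : 0 < c) (hbc : 4 * b ^ 2 < c ^ 2) :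
    ∫ y in Ioi 0, y * exp (-(c * y)) * besselI0 (2 * b * y) =
      ∑' m : ℕ, ((2 * m + 1)! : ℝ) / (m ! : ℝ) ^ 2 * b ^ (2 * m) / c ^ (2 * m + 2) := by
  set F : ℕ → ℝ → ℝ :=
    fun m y ↦ (b ^ 2) ^ m / (m ! : ℝ) ^ 2 * (y ^ (2 * m + 1) * exp (-(c * y)))
  have hF_int (m : ℕ) : IntegrableOn (F m) (Ioi 0) :=
    (integrableOn_pow_mul_exp_neg_mul_Ioi _ hc).const_mul _
  have hF_integral (m : ℕ) : ∫ y in Ioi 0, F m y =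
      ((2 * m + 1)! : ℝ) / (m ! : ℝ) ^ 2 * b ^ (2 * m) / c ^ (2 * m + 2) := by
    rw [integral_const_mul, integral_pow_mul_exp_neg_mul_Ioi _ hc, pow_mul]
    ring
  have hF_norm (m : ℕ) : ∫ y in Ioi 0, ‖F m y‖ = ∫ y in Ioi 0, F m y :=
    setIntegral_congr_fun measurableSet_Ioi fun y (hy : 0 < y) ↦ norm_of_nonneg (by positivity)
  have hsum : Summable fun m ↦ ∫ y in Ioi 0, F m y := by
    have hq : 4 * (b ^ 2 / c ^ 2) < 1 := by
      rw [mul_div_assoc', div_lt_one (by positivity)]; exact hbc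
    refine ((summable_factorial_two_mul_add_one_div_sq_mul_pow (by positivity) hq).div_const
      (c ^ 2)).congr fun m ↦ ?_
    rw [hF_integral, div_pow, ← pow_mul, ← pow_mul, pow_add]
    ring
  calc ∫ y in Ioi 0, y * exp (-(c * y)) * besselI0 (2 * b * y)
      = ∫ y in Ioi 0, ∑' m, F m y := by
        congr 1; funext y
        simp only [besselI0, F, ← tsum_mul_left]
        congr 1; funext m
        ring
    _ = ∑' m, ∫ y in Ioi 0, F m y :=
        (integral_tsum_of_summable_integral_norm hF_int (by simpa only [hF_norm] using hsum)).symm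
    _ = _ := tsum_congr hF_integral

lemma four_mul_mul_lt_one_add_div_sq {ρ : ℝ} (hρ0 : ρ ≠ 0) (hρ1 : ρ ^ 2 < 1) (x : ℝ) :
    4 * (ρ * x) < (1 + x / ρ) ^ 2 := by
  obtain ⟨u, rfl⟩ : ∃ u, x = ρ * u := ⟨x / ρ, (mul_div_cancel₀ x hρ0).symm⟩
  rw [mul_div_cancel_left₀ u hρ0]
  -- (1 + u)² - 4ρ²u = (u + 1 - 2ρ²)² + 4ρ²(1 - ρ²)
  nlinarith [sq_nonneg (u + 1 - 2 * ρ ^ 2), mul_pos (sq_pos_of_ne_zero hρ0) (sub_pos.2 hρ1)]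

lemma integral_ratio_density_eq_tsum {ρ s x : ℝ} (hρ0 : 0 < ρ) (hρ1 : ρ < 1) (hs : 0 < s)
    (hx : 0 ≤ x) :
    ∫ y in Ioi 0, (1 - ρ ^ 2) / (ρ * s ^ 2) *
        (y * exp (-((1 + x / ρ) / s * y)) * besselI0 (2 * (√(ρ * x) / s) * y)) =
      ∑' m : ℕ, (1 - ρ ^ 2) * ρ ^ ((m : ℤ) - 1) * ((2 * m + 1)! : ℝ) / (m ! : ℝ) ^ 2 *
        x ^ m / (1 + x / ρ) ^ (2 * m + 2) := by
  have hD : 0 < 1 + x / ρ := by positivity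
  have hbc : 4 * (√(ρ * x) / s) ^ 2 < ((1 + x / ρ) / s) ^ 2 := by
    rw [div_pow, div_pow, sq_sqrt (by positivity), mul_div_assoc',
      div_lt_div_iff_of_pos_right (by positivity)]
    exact four_mul_mul_lt_one_add_div_sq hρ0.ne' (by nlinarith) x
  rw [integral_const_mul, integral_mul_exp_neg_mul_besselI0 (by positivity) hbc, ← tsum_mul_left]
  generalize 1 + x / ρ = D at hD ⊢
  refine tsum_congr fun m ↦ ?_
  simp only [zpow_sub_one₀ hρ0.ne', zpow_natCast, pow_mul, div_pow,
    sq_sqrt (by positivity : 0 ≤ ρ * x)]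
  field_simp
  ring

/-- Density of the ratio `X = |h₀|²/|h₁|²` of two correlated exponential channel energies:
`f_X(x) = ∫₀^∞ y f(xy, y) dy = Σ_m C_{4m} x^m / (1 + x/ρ)^(2m+2)`. -/
theorem stmt17 (σ0 σ1 ρ : ℝ) (hσ0 : 0 < σ0) (hσ1 : 0 < σ1)
    (hρ : ρ = σ0 ^ 2 / σ1 ^ 2) (hρ0 : 0 < ρ) (hρ1 : ρ < 1)
    (f : ℝ → ℝ → ℝ)
    (hf : ∀ y1 y2, f y1 y2 = (1 / ((1 - ρ ^ 2) * σ0 ^ 2 * σ1 ^ 2)) *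
      Real.exp (-(y1 / σ0 ^ 2 + y2 / σ1 ^ 2) / (1 - ρ ^ 2)) *
      besselI0 (2 * ρ * Real.sqrt (y1 * y2) / (σ0 * σ1 * (1 - ρ ^ 2))))
    (C : ℕ → ℝ)
    (hC : ∀ m, C m = (1 - ρ ^ 2) * ρ ^ ((m : ℤ) - 1) * ((2 * m + 1).factorial : ℝ) /
      ((m.factorial : ℝ)) ^ 2)
    (x : ℝ) (hx : 0 ≤ x) :
    (∫ y in Set.Ioi (0:ℝ), y * f (x * y) y) =
      ∑' m : ℕ, C m * x ^ m / (1 + x / ρ) ^ (2 * m + 2) := by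
  have hρsq : 0 < 1 - ρ ^ 2 := by nlinarith
  obtain rfl : σ0 = √ρ * σ1 := by
    rw [hρ, sqrt_div' _ (sq_nonneg σ1), sqrt_sq hσ0.le, sqrt_sq hσ1.le, div_mul_cancel₀ _ hσ1.ne']
  have hsq : (√ρ * σ1) ^ 2 = ρ * σ1 ^ 2 := by rw [mul_pow, sq_sqrt hρ0.le]
  have hintegrand (y : ℝ) (hy : y ∈ Ioi 0) :
      y * f (x * y) y = (1 - ρ ^ 2) / (ρ * (σ1 ^ 2 * (1 - ρ ^ 2)) ^ 2) *
        (y * exp (-((1 + x / ρ) / (σ1 ^ 2 * (1 - ρ ^ 2)) * y)) *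
          besselI0 (2 * (√(ρ * x) / (σ1 ^ 2 * (1 - ρ ^ 2))) * y)) := by
    have hexp : -(x * y / (ρ * σ1 ^ 2) + y / σ1 ^ 2) / (1 - ρ ^ 2) =
        -((1 + x / ρ) / (σ1 ^ 2 * (1 - ρ ^ 2)) * y) := by
      field_simp
      ring
    have hbessel : 2 * ρ * (√x * y) / (√ρ * σ1 * σ1 * (1 - ρ ^ 2)) =
        2 * (√ρ * √x / (σ1 ^ 2 * (1 - ρ ^ 2))) * y := by
      field_simp
      rw [sq_sqrt hρ0.le]
      ring
    rw [hf, hsq, mul_assoc x, sqrt_mul hx, sqrt_mul_self hy.out.le, sqrt_mul hρ0.le, hexp,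
      hbessel]
    field_simp
  rw [setIntegral_congr_fun measurableSet_Ioi hintegrand,
    integral_ratio_density_eq_tsum hρ0 hρ1 (by positivity) hx]
  exact tsum_congr fun m ↦ by rw [hC]
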